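/- Let G be a countable discrete group, Σ = (σ_n : G → Sym(V_n)) a sofic approximation to G, A and B finite sets, μ a G-process on A^G, and (μ_n) a sequence of probability measures on A^{V_n} that locally weak* converges to μ over Σ. Let (φ_m : A^G → B)_{m=1}^∞ be a sequence of local observables (each φ_m is F_m-local for some finite F_m ⊆ G) and let φ : A^G → B be a local observable. Let c > 0 and let S_n ⊆ V_n be sets with |S_n| ≥ c·|V_n| for all n. Then there exists a nondecreasing sequence (m_n)_{n=1}^∞ of positive integers with m_n → ∞ such that for every ε > 0, for all sufficiently large n: (1/|S_n|)·| H(π_{S_n*}(φ^{σ_n})_* μ_n) − H(π_{S_n*}(φ_{m_n}^{σ_n})_* μ_n) | ≤ d^Rok_μ(φ,φ_{m_n}) + ε. -/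

import Mathlib

/-! By the chain rule and the fact that conditioning does not increase entropy, the two joint
entropies over `S_n` differ by at most the sum over `v ∈ S_n` of the Rokhlin distances between
the two observables read off at `v`. That distance only depends on the law of the pattern on a
fixed finite window, as a uniformly continuous function on the (compact) simplex. By local weak*
convergence all but `δ|V_n|` vertices see a pattern law `δ`-close to that of `μ`, and contribute
at most `d^Rok_μ(φ, φ_m) + ε/2`; the others contribute a bounded amount, which becomes negligible
after dividing by `|S_n| ≥ c|V_n|`. So for each fixed `m` the bound holds with error `1/(m+1)`
for all large `n`, and a diagonal choice of `m_n` finishes the proof. -/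

open MeasureTheory Filter

/-- Shannon entropy of a measure on a finite set, with the convention `0 * log 0 = 0`. -/
noncomputable def shannonEntropy {D : Type*} [Fintype D] [MeasurableSpace D]
    (η : Measure D) : ℝ :=
  -∑ d : D, (η {d}).toReal * Real.log (η {d}).toReal

/-- Shannon entropy `H_μ(α)` of a finite-valued observable: the entropy of the
pushforward measure `α_* μ`. -/
noncomputable def obsEntropy {X D : Type*} [MeasurableSpace X] [Fintype D] [MeasurableSpace D]
    (μ : Measure X) (α : X → D) : ℝ :=
  shannonEntropy (Measure.map α μ)

/-- Conditional Shannon entropy `H_μ(α | β) = H_μ((α,β)) - H_μ(β)`. -/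
noncomputable def condEntropyObs {X D E : Type*} [MeasurableSpace X]
    [Fintype D] [MeasurableSpace D] [Fintype E] [MeasurableSpace E]
    (μ : Measure X) (α : X → D) (β : X → E) : ℝ :=
  obsEntropy μ (fun x => (α x, β x)) - obsEntropy μ β

/-- The Rokhlin distance `d^Rok_μ(α, β) = H_μ(α|β) + H_μ(β|α)`. -/
noncomputable def rokDist {X D E : Type*} [MeasurableSpace X]
    [Fintype D] [MeasurableSpace D] [Fintype E] [MeasurableSpace E]
    (μ : Measure X) (α : X → D) (β : X → E) : ℝ :=
  condEntropyObs μ α β + condEntropyObs μ β α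

/-- `σ = (σ_n : G → Sym(V_n))` is a sofic approximation to `G`. -/
def IsSoficApprox {G : Type*} [Group G] {V : ℕ → Type*} [∀ n, Fintype (V n)]
    (σ : ∀ n, G → Equiv.Perm (V n)) : Prop :=
  Tendsto (fun n => Fintype.card (V n)) atTop atTop ∧
    (∀ g h : G,
      Tendsto (fun n =>
          (Nat.card {v : V n // σ n g (σ n h v) = σ n (g * h) v} : ℝ) /
            (Fintype.card (V n) : ℝ)) atTop (nhds 1)) ∧
    (∀ g : G, g ≠ 1 →
      Tendsto (fun n =>
          (Nat.card {v : V n // σ n g v = v} : ℝ) / (Fintype.card (V n) : ℝ))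
        atTop (nhds 0))

/-- Total variation distance between two measures on a finite set. -/
noncomputable def tvDist {D : Type*} [Fintype D] [MeasurableSpace D]
    (η₁ η₂ : Measure D) : ℝ :=
  (∑ d : D, |(η₁ {d}).toReal - (η₂ {d}).toReal|) / 2

/-- The sequence of measures `μn n` on `V n → A` locally weak* converges over the sofic
approximation `σ` to the measure `μ` on `A^G`: for every finite `F ⊆ G` and `δ > 0`,
eventually at least `(1-δ)|V_n|` of the `v ∈ V_n` satisfy
`‖(Π^{σ_n}_{v,F})_* μ_n − μ_F‖_TV < δ`. -/
def LocalWeakStarConverges {G : Type*} [Group G] [DecidableEq G] {V : ℕ → Type*}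
    [∀ n, Fintype (V n)] {A : Type*} [Fintype A] [MeasurableSpace A]
    (σ : ∀ n, G → Equiv.Perm (V n)) (μn : ∀ n, Measure (V n → A))
    (μ : Measure (G → A)) : Prop :=
  ∀ (F : Finset G) (δ : ℝ), 0 < δ → ∀ᶠ n in atTop,
    ((1 - δ) * (Fintype.card (V n) : ℝ)) ≤
      (Nat.card {v : V n //
        tvDist (Measure.map (fun (x : V n → A) (g : ↥F) => x (σ n g.1 v)) (μn n))
          (Measure.map (fun (a : G → A) (g : ↥F) => a g.1) μ) < δ} : ℝ)

open Finset Real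

section Entropy

lemma shannonEntropy_eq_sum_negMulLog {D : Type*} [Fintype D] [MeasurableSpace D]
    (η : Measure D) : shannonEntropy η = ∑ d, negMulLog (η.real {d}) := by
  simp [shannonEntropy, negMulLog, measureReal_def]

variable {Y D E : Type*} [Fintype Y] [MeasurableSpace Y] [MeasurableSingletonClass Y]
  [MeasurableSpace D] [MeasurableSingletonClass D] [MeasurableSpace E] [MeasurableSingletonClass E]
  (ν : Measure Y) [IsFiniteMeasure ν]

lemma map_measureReal_singleton [DecidableEq D] (f : Y → D) (d : D) :
    (ν.map f).real {d} = ∑ y with f y = d, ν.real {y} := by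
  rw [map_measureReal_apply .of_discrete (measurableSet_singleton d),
    sum_measureReal_singleton]
  congr
  ext
  simp

lemma measureReal_singleton_le_map (f : Y → D) (y : Y) : ν.real {y} ≤ (ν.map f).real {f y} := by
  rw [map_measureReal_apply .of_discrete (measurableSet_singleton _)]
  exact measureReal_mono (by simp)

lemma abs_map_measureReal_sub_le_two_mul_tvDist (ν' : Measure Y) [IsFiniteMeasure ν'] (f : Y → D)
    (d : D) :
    |(ν.map f).real {d} - (ν'.map f).real {d}| ≤ 2 * tvDist ν ν' := by
  classical
  rw [map_measureReal_singleton, map_measureReal_singleton, ← sum_sub_distrib]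
  calc _ ≤ ∑ w with f w = d, |ν.real {w} - ν'.real {w}| := abs_sum_le_sum_abs _ _
    _ ≤ ∑ w, |ν.real {w} - ν'.real {w}| :=
      sum_le_sum_of_subset_of_nonneg (filter_subset _ _) fun _ _ _ => abs_nonneg _
    _ = 2 * tvDist ν ν' := by simp [tvDist, measureReal_def]; ring

lemma sum_map_prod_measureReal_singleton_left [Fintype D] (f : Y → D) (g : Y → E) (e : E) :
    ∑ d, (ν.map fun y => (f y, g y)).real {(d, e)} = (ν.map g).real {e} := by
  classical
  simp only [map_measureReal_singleton, Prod.mk.injEq]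
  rw [← sum_fiberwise {y | g y = e} f]
  simp [filter_filter, and_comm]

lemma sum_map_prod_measureReal_singleton_right [Fintype E] (f : Y → D) (g : Y → E) (d : D) :
    ∑ e, (ν.map fun y => (f y, g y)).real {(d, e)} = (ν.map f).real {d} := by
  classical
  simp only [map_measureReal_singleton, Prod.mk.injEq]
  rw [← sum_fiberwise {y | f y = d} g]
  simp [filter_filter]

variable [Fintype D] [Fintype E]

lemma sum_map_measureReal_singleton_mul (f : Y → D) (T : D → ℝ) :
    ∑ d, (ν.map f).real {d} * T d = ∑ y, ν.real {y} * T (f y) := by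
  have hf : AEMeasurable f ν := Measurable.of_discrete.aemeasurable
  calc ∑ d, (ν.map f).real {d} * T d = ∫ d, T d ∂ν.map f := by
        simp [integral_fintype (.of_finite)]
    _ = ∫ y, T (f y) ∂ν := integral_map hf (by fun_prop)
    _ = ∑ y, ν.real {y} * T (f y) := by simp [integral_fintype (.of_finite)]

lemma obsEntropy_eq_sum (f : Y → D) :
    obsEntropy ν f = ∑ y, ν.real {y} * -log ((ν.map f).real {f y}) := by
  rw [obsEntropy, shannonEntropy_eq_sum_negMulLog,
    ← sum_map_measureReal_singleton_mul ν f fun d => -log ((ν.map f).real {d})]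
  simp [negMulLog]

lemma obsEntropy_le_of_factor {f : Y → D} {g : Y → E} (hfg : ∀ x y, f x = f y → g x = g y) :
    obsEntropy ν g ≤ obsEntropy ν f := by
  rw [obsEntropy_eq_sum, obsEntropy_eq_sum]
  refine sum_le_sum fun y _ => ?_
  rcases (measureReal_nonneg (μ := ν) (s := {y})).eq_or_lt with h0 | hpos
  · simp [← h0]
  have hle : (ν.map f).real {f y} ≤ (ν.map g).real {g y} := by
    simp only [map_measureReal_apply Measurable.of_discrete (measurableSet_singleton _)]
    exact measureReal_mono fun x hx => hfg x y hx
  gcongr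
  exact hpos.trans_le (measureReal_singleton_le_map ν f y)

lemma obsEntropy_congr {f : Y → D} {g : Y → E} (hfg : ∀ x y, f x = f y ↔ g x = g y) :
    obsEntropy ν f = obsEntropy ν g :=
  le_antisymm (obsEntropy_le_of_factor ν fun x y => (hfg x y).2)
    (obsEntropy_le_of_factor ν fun x y => (hfg x y).1)

lemma condEntropyObs_nonneg (f : Y → D) (g : Y → E) : 0 ≤ condEntropyObs ν f g :=
  sub_nonneg.2 <| obsEntropy_le_of_factor ν fun _ _ h => (Prod.mk.inj h).2

lemma sum_map_measureReal_mul_div_le {K : Type*} [Fintype K] [MeasurableSpace K]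
    [MeasurableSingletonClass K] (f : Y → D) (g : Y → E) (r : E → K) :
    ∑ z : D × E, (ν.map g).real {z.2} * ((ν.map fun y => (f y, r (g y))).real {(z.1, r z.2)} /
      (ν.map fun y => r (g y)).real {r z.2}) ≤ ∑ y, ν.real {y} := by
  calc _ = ∑ e, (ν.map g).real {e} * ((ν.map fun y => r (g y)).real {r e} /
        (ν.map fun y => r (g y)).real {r e}) := by
        rw [Fintype.sum_prod_type_right]
        simp only [← mul_sum, ← sum_div, sum_map_prod_measureReal_singleton_left]
    _ ≤ ∑ e, (ν.map g).real {e} :=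
      sum_le_sum fun e _ => mul_le_of_le_one_right measureReal_nonneg (div_self_le_one _)
    _ = ∑ y, ν.real {y} := by simpa using sum_map_measureReal_singleton_mul ν g fun _ => 1

lemma condEntropyObs_le_comp {K : Type*} [Fintype K] [MeasurableSpace K]
    [MeasurableSingletonClass K] (f : Y → D) (g : Y → E) (r : E → K) :
    condEntropyObs ν f g ≤ condEntropyObs ν f fun y => r (g y) := by
  set k : Y → K := fun y => r (g y)
  set Pfg : D × E → ℝ := fun z => (ν.map fun y => (f y, g y)).real {z}
  set Pfk : D × K → ℝ := fun z => (ν.map fun y => (f y, k y)).real {z}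
  set Pg : E → ℝ := fun e => (ν.map g).real {e}
  set Pk : K → ℝ := fun c => (ν.map k).real {c}
  -- log-sum inequality through `log t ≤ t - 1`
  set T : D × E → ℝ := fun z => Pg z.2 * Pfk (z.1, r z.2) / (Pfg z * Pk (r z.2))
  have hterm : ∀ y, ν.real {y} *
      (log (Pg (g y)) + log (Pfk (f y, k y)) - log (Pfg (f y, g y)) - log (Pk (k y))) ≤
      ν.real {y} * (T (f y, g y) - 1) := by
    intro y
    rcases (measureReal_nonneg (μ := ν) (s := {y})).eq_or_lt with h0 | hpos
    · simp [← h0]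
    have h1 : 0 < Pg (g y) := hpos.trans_le (measureReal_singleton_le_map ν g y)
    have h2 : 0 < Pfk (f y, k y) := hpos.trans_le (measureReal_singleton_le_map ν _ y)
    have h3 : 0 < Pfg (f y, g y) := hpos.trans_le (measureReal_singleton_le_map ν _ y)
    have h4 : 0 < Pk (k y) := hpos.trans_le (measureReal_singleton_le_map ν k y)
    have hT : log (T (f y, g y)) =
        log (Pg (g y)) + log (Pfk (f y, k y)) - log (Pfg (f y, g y)) - log (Pk (k y)) := by
      rw [log_div (by positivity) (by positivity), log_mul h1.ne' h2.ne', log_mul h3.ne' h4.ne']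
      ring
    rw [← hT]
    exact mul_le_mul_of_nonneg_left (log_le_sub_one_of_pos (by positivity)) hpos.le
  have hsum : ∑ y, ν.real {y} * T (f y, g y) ≤ ∑ y, ν.real {y} := by
    calc ∑ y, ν.real {y} * T (f y, g y) = ∑ z, Pfg z * T z :=
          (sum_map_measureReal_singleton_mul ν (fun y => (f y, g y)) T).symm
      _ ≤ ∑ z : D × E, Pg z.2 * (Pfk (z.1, r z.2) / Pk (r z.2)) := by
          refine sum_le_sum fun z _ => ?_
          rcases eq_or_ne (Pfg z) 0 with h0 | hne
          · rw [h0, zero_mul]; positivity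
          · rw [← mul_div_assoc, mul_div_assoc', mul_div_mul_left _ _ hne]
      _ ≤ ∑ y, ν.real {y} := sum_map_measureReal_mul_div_le ν f g r
  refine sub_nonpos.1 ?_
  calc condEntropyObs ν f g - condEntropyObs ν f k
      = ∑ y, ν.real {y} * (log (Pg (g y)) + log (Pfk (f y, k y)) - log (Pfg (f y, g y)) -
          log (Pk (k y))) := by
        simp only [condEntropyObs, obsEntropy_eq_sum, mul_sub, mul_add, mul_neg, sum_sub_distrib,
          sum_add_distrib, sum_neg_distrib, Pg, Pfk, Pfg, Pk]
        ring
    _ ≤ ∑ y, ν.real {y} * (T (f y, g y) - 1) := sum_le_sum fun y _ => hterm y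
    _ ≤ 0 := by simp only [mul_sub, mul_one, sum_sub_distrib]; linarith

end Entropy

section Chain

variable {Y ι B : Type*} [Fintype Y] [MeasurableSpace Y] [MeasurableSingletonClass Y]
  [Fintype ι] [DecidableEq ι] [Fintype B] [MeasurableSpace B] [MeasurableSingletonClass B]
  (ν : Measure Y) [IsFiniteMeasure ν]

lemma obsEntropy_pi_le_add_sum_condEntropyObs (α β : ι → Y → B) :
    obsEntropy ν (fun y i => α i y) ≤
      obsEntropy ν (fun y i => β i y) + ∑ i, condEntropyObs ν (α i) (β i) := by
  -- trade the `β`-coordinates for the `α`-coordinates one at a time, each costing `H(α i | β i)`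
  let hybrid (T : Finset ι) (y : Y) (i : ι) : B := if i ∈ T then α i y else β i y
  suffices ∀ T, obsEntropy ν (hybrid T) ≤
      obsEntropy ν (fun y i => β i y) + ∑ i ∈ T, condEntropyObs ν (α i) (β i) by
    simpa [hybrid] using this univ
  intro T
  induction T using Finset.induction_on with
  | empty => simp [hybrid]
  | @insert i T hi ih =>
    have hstep : obsEntropy ν (hybrid (insert i T)) ≤
        obsEntropy ν fun y => (α i y, hybrid T y) := by
      refine obsEntropy_le_of_factor ν fun x y hxy => funext fun j => ?_
      obtain ⟨hα, hT⟩ := Prod.mk.inj hxy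
      by_cases hj : j = i
      · simp [hybrid, hj, hα]
      · simpa [hybrid, hj] using congrFun hT j
    have hcond : condEntropyObs ν (α i) (hybrid T) ≤ condEntropyObs ν (α i) (β i) := by
      simpa [hybrid, hi] using condEntropyObs_le_comp ν (α i) (hybrid T) fun h => h i
    rw [sum_insert hi]
    linarith [show obsEntropy ν (fun y => (α i y, hybrid T y)) =
      obsEntropy ν (hybrid T) + condEntropyObs ν (α i) (hybrid T) by simp [condEntropyObs]]

lemma abs_obsEntropy_pi_sub_le_sum_rokDist (α β : ι → Y → B) :
    |obsEntropy ν (fun y i => α i y) - obsEntropy ν (fun y i => β i y)| ≤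
      ∑ i, rokDist ν (α i) (β i) := by
  have hαβ := obsEntropy_pi_le_add_sum_condEntropyObs ν α β
  have hβα := obsEntropy_pi_le_add_sum_condEntropyObs ν β α
  have h₁ : ∑ i, condEntropyObs ν (α i) (β i) ≤ ∑ i, rokDist ν (α i) (β i) :=
    sum_le_sum fun i _ => le_add_of_nonneg_right (condEntropyObs_nonneg ν _ _)
  have h₂ : ∑ i, condEntropyObs ν (β i) (α i) ≤ ∑ i, rokDist ν (α i) (β i) :=
    sum_le_sum fun i _ => le_add_of_nonneg_left (condEntropyObs_nonneg ν _ _)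
  rw [abs_sub_le_iff]
  constructor <;> linarith

end Chain

section Rokhlin

variable {D E : Type*} [Fintype D] [Fintype E]

noncomputable def jointRokDist (q : D × E → ℝ) : ℝ :=
  2 * ∑ z, negMulLog (q z) - ∑ d, negMulLog (∑ e, q (d, e)) - ∑ e, negMulLog (∑ d, q (d, e))

lemma continuous_jointRokDist : Continuous (jointRokDist : (D × E → ℝ) → ℝ) := by
  unfold jointRokDist
  fun_prop

variable {W : Type*} [Fintype W] [MeasurableSpace W] [MeasurableSingletonClass W]
  [MeasurableSpace D] [MeasurableSpace E]

lemma rokDist_comp {X : Type*} [MeasurableSpace X] (μ : Measure X) {f : X → W}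
    (hf : Measurable f) (a : W → D) (b : W → E) :
    rokDist μ (fun x => a (f x)) (fun x => b (f x)) = rokDist (μ.map f) a b := by
  simp only [rokDist, condEntropyObs, obsEntropy, Measure.map_map .of_discrete hf]
  rfl

variable [MeasurableSingletonClass D] [MeasurableSingletonClass E]

lemma rokDist_nonneg (ν : Measure W) [IsFiniteMeasure ν] (a : W → D) (b : W → E) :
    0 ≤ rokDist ν a b :=
  add_nonneg (condEntropyObs_nonneg ν a b) (condEntropyObs_nonneg ν b a)

lemma rokDist_fst_snd (η : Measure (D × E)) [IsFiniteMeasure η] :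
    rokDist η Prod.fst Prod.snd = jointRokDist fun z => η.real {z} := by
  have hswap : obsEntropy η (fun z => (z.2, z.1)) = obsEntropy η fun z => (z.1, z.2) :=
    obsEntropy_congr η fun _ _ => by simp [Prod.ext_iff, and_comm]
  have hfst := sum_map_prod_measureReal_singleton_right η Prod.fst Prod.snd
  have hsnd := sum_map_prod_measureReal_singleton_left η Prod.fst Prod.snd
  simp only [Prod.mk.eta, Measure.map_id'] at hfst hsnd
  simp only [rokDist, condEntropyObs]
  rw [hswap]
  simp only [obsEntropy, shannonEntropy_eq_sum_negMulLog, Prod.mk.eta, Measure.map_id',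
    jointRokDist, ← hfst, ← hsnd]
  ring

lemma rokDist_eq_jointRokDist (η : Measure W) [IsFiniteMeasure η] (a : W → D) (b : W → E) :
    rokDist η a b = jointRokDist fun z => (η.map fun w => (a w, b w)).real {z} := by
  rw [← rokDist_fst_snd, ← rokDist_comp η .of_discrete]

lemma map_measureReal_singleton_mem_stdSimplex (η : Measure W) [IsProbabilityMeasure η]
    (f : W → D) : (fun d => (η.map f).real {d}) ∈ stdSimplex ℝ D :=
  ⟨fun _ => measureReal_nonneg, by simpa using sum_map_measureReal_singleton_mul η f fun _ => 1⟩

lemma exists_forall_tvDist_lt_rokDist_le (a : W → D) (b : W → E) {ε : ℝ} (hε : 0 < ε) :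
    ∃ δ > 0, ∀ (η η' : Measure W) [IsProbabilityMeasure η] [IsProbabilityMeasure η'],
      tvDist η η' < δ → rokDist η a b ≤ rokDist η' a b + ε := by
  obtain ⟨δ, hδ, hcont⟩ := Metric.uniformContinuousOn_iff.1
    ((isCompact_stdSimplex ℝ (D × E)).uniformContinuousOn_of_continuous
      continuous_jointRokDist.continuousOn) ε hε
  refine ⟨δ / 2, half_pos hδ, fun η η' _ _ htv => ?_⟩
  have hdist : dist (fun z => (η.map fun w => (a w, b w)).real {z})
      (fun z => (η'.map fun w => (a w, b w)).real {z}) ≤ 2 * tvDist η η' :=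
    (dist_pi_le_iff (by unfold tvDist; positivity)).2 fun z =>
      abs_map_measureReal_sub_le_two_mul_tvDist η η' _ z
  have := hcont _ (map_measureReal_singleton_mem_stdSimplex η _) _
    (map_measureReal_singleton_mem_stdSimplex η' _) (hdist.trans_lt (by linarith))
  rw [rokDist_eq_jointRokDist, rokDist_eq_jointRokDist]
  linarith [(abs_lt.1 this).2]

lemma exists_forall_rokDist_le (a : W → D) (b : W → E) :
    ∃ L, 0 ≤ L ∧ ∀ (η : Measure W) [IsProbabilityMeasure η], rokDist η a b ≤ L := by
  obtain ⟨C, hC⟩ := (isCompact_stdSimplex ℝ (D × E)).exists_bound_of_continuousOn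
    continuous_jointRokDist.continuousOn
  refine ⟨max C 0, le_max_right _ _, fun η _ => ?_⟩
  rw [rokDist_eq_jointRokDist]
  exact (le_abs_self _).trans
    ((hC _ (map_measureReal_singleton_mem_stdSimplex η _)).trans (le_max_left _ _))

end Rokhlin

section Sofic

variable {G : Type*} {V : ℕ → Type*} [∀ n, Fintype (V n)] [∀ n, DecidableEq (V n)]
  {A B : Type*} [Fintype A] [MeasurableSpace A] [MeasurableSingletonClass A]
  [Fintype B] [MeasurableSpace B] [MeasurableSingletonClass B]
  (σ : ∀ n, G → Equiv.Perm (V n)) (μn : ∀ n, Measure (V n → A)) (S : ∀ n, Finset (V n))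

/-- The pattern `Π^{σ_n}_{v,F}`. -/
def soficPattern (n : ℕ) (F : Finset G) (v : V n) (x : V n → A) : ↥F → A :=
  fun g => x (σ n g.1 v)

/-- `H(π_{S_n*} (φ^{σ_n})_* μ_n)` for the local observable `φ = θ ∘ π_F`. -/
noncomputable def soficObsEntropy (F : Finset G) (θ : (↥F → A) → B) (n : ℕ) : ℝ :=
  shannonEntropy (Measure.map (fun (b : V n → B) (s : ↥(S n)) => b s.1)
    (Measure.map (fun (x : V n → A) (v : V n) => θ (fun g : ↥F => x (σ n g.1 v))) (μn n)))

lemma soficObsEntropy_eq_obsEntropy (F : Finset G) (θ : (↥F → A) → B) (n : ℕ) :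
    soficObsEntropy σ μn S F θ n =
      obsEntropy (μn n) fun x (s : ↥(S n)) => θ (soficPattern σ n F s x) := by
  rw [soficObsEntropy, obsEntropy, Measure.map_map .of_discrete .of_discrete]
  rfl

lemma abs_soficObsEntropy_sub_le [DecidableEq G] [∀ n, IsFiniteMeasure (μn n)] (n : ℕ)
    {F₁ F₂ : Finset G} (θ₁ : (↥F₁ → A) → B) (θ₂ : (↥F₂ → A) → B) :
    |soficObsEntropy σ μn S F₁ θ₁ n - soficObsEntropy σ μn S F₂ θ₂ n| ≤
      ∑ v ∈ S n, rokDist ((μn n).map (soficPattern σ n (F₁ ∪ F₂) v))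
        (fun y => θ₁ fun g => y ⟨g, mem_union_left _ g.2⟩)
        (fun y => θ₂ fun g => y ⟨g, mem_union_right _ g.2⟩) := by
  rw [soficObsEntropy_eq_obsEntropy, soficObsEntropy_eq_obsEntropy, ← sum_coe_sort (S n)]
  refine (abs_obsEntropy_pi_sub_le_sum_rokDist (μn n)
    (fun (s : ↥(S n)) x => θ₁ (soficPattern σ n F₁ s x))
    (fun (s : ↥(S n)) x => θ₂ (soficPattern σ n F₂ s x))).trans_eq
    (sum_congr rfl fun v _ => ?_)
  rw [← rokDist_comp (μn n) .of_discrete]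
  rfl

lemma card_filter_not_le_of_le_card_filter {ι : Type*} [Fintype ι] (s : Finset ι)
    (p : ι → Prop) [DecidablePred p] {δ : ℝ} (h : (1 - δ) * Fintype.card ι ≤ (#{i | p i} : ℝ)) :
    (#{i ∈ s | ¬ p i} : ℝ) ≤ δ * Fintype.card ι := by
  have hsub : #{i ∈ s | ¬ p i} ≤ #{i | ¬ p i} :=
    card_le_card (filter_subset_filter _ (subset_univ _))
  have hsplit := card_filter_add_card_filter_not (s := univ) p
  rw [card_univ] at hsplit
  have : (#{i ∈ s | ¬ p i} : ℝ) ≤ #{i | ¬ p i} := by exact_mod_cast hsub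
  have : (#{i | p i} : ℝ) + #{i | ¬ p i} = Fintype.card ι := by exact_mod_cast hsplit
  linarith

lemma sum_le_card_mul_add_card_filter_not_mul {ι : Type*} (s : Finset ι) (R : ι → ℝ)
    (p : ι → Prop) [DecidablePred p] {a L : ℝ} (hp : ∀ i ∈ s, p i → R i ≤ a)
    (hR : ∀ i ∈ s, R i ≤ a + L) :
    ∑ i ∈ s, R i ≤ #s * a + #{i ∈ s | ¬ p i} * L := by
  calc ∑ i ∈ s, R i ≤ ∑ i ∈ s, (a + if p i then 0 else L) := sum_le_sum fun i hi => by
        split_ifs with h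
        · simpa using hp i hi h
        · exact hR i hi
    _ = #s * a + #{i ∈ s | ¬ p i} * L := by simp [sum_add_distrib, sum_ite]

lemma eventually_soficObsEntropy_sub_le [Group G] [DecidableEq G]
    {σ : ∀ n, G → Equiv.Perm (V n)} {μ : Measure (G → A)} [IsProbabilityMeasure μ] {μn : ∀ n, Measure (V n → A)}
    [∀ n, IsProbabilityMeasure (μn n)] (hconv : LocalWeakStarConverges σ μn μ)
    {c : ℝ} (hc : 0 < c) {S : ∀ n, Finset (V n)}
    (hS : ∀ n, c * (Fintype.card (V n) : ℝ) ≤ (#(S n) : ℝ)) {F₁ F₂ : Finset G}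
    (θ₁ : (↥F₁ → A) → B) (θ₂ : (↥F₂ → A) → B) {ε : ℝ} (hε : 0 < ε) :
    ∀ᶠ n in atTop, 1 / (#(S n) : ℝ) *
        |soficObsEntropy σ μn S F₁ θ₁ n - soficObsEntropy σ μn S F₂ θ₂ n| ≤
      rokDist μ (fun a => θ₁ fun g : ↥F₁ => a g.1) (fun a => θ₂ fun g : ↥F₂ => a g.1) + ε := by
  classical
  set F := F₁ ∪ F₂
  set Θ₁ : (↥F → A) → B := fun y => θ₁ fun g => y ⟨g, mem_union_left _ g.2⟩
  set Θ₂ : (↥F → A) → B := fun y => θ₂ fun g => y ⟨g, mem_union_right _ g.2⟩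
  set πF : (G → A) → ↥F → A := fun a g => a g.1
  have hπF : Measurable πF := by fun_prop
  set η := μ.map πF
  have : IsProbabilityMeasure η := Measure.isProbabilityMeasure_map hπF.aemeasurable
  rw [rokDist_comp μ hπF Θ₁ Θ₂]
  set ρ := rokDist η Θ₁ Θ₂
  have hρ : 0 ≤ ρ := rokDist_nonneg η Θ₁ Θ₂
  obtain ⟨δ₀, hδ₀, hclose⟩ := exists_forall_tvDist_lt_rokDist_le Θ₁ Θ₂ (half_pos hε)
  obtain ⟨L, hL, hbound⟩ := exists_forall_rokDist_le Θ₁ Θ₂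
  set δ := min δ₀ (c * ε / (2 * L + 1))
  have hδL : δ * L ≤ c * ε / 2 := by
    have := (le_div_iff₀ (by positivity)).1 (min_le_right δ₀ (c * ε / (2 * L + 1)))
    nlinarith [lt_min hδ₀ (by positivity : 0 < c * ε / (2 * L + 1))]
  filter_upwards [hconv F δ (lt_min hδ₀ (by positivity))] with n hn
  set good : V n → Prop := fun v => tvDist ((μn n).map (soficPattern σ n F v)) η < δ
  have hprob (v : V n) : IsProbabilityMeasure ((μn n).map (soficPattern σ n F v)) :=
    Measure.isProbabilityMeasure_map Measurable.of_discrete.aemeasurable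
  have hbad : (#{v ∈ S n | ¬ good v} : ℝ) * L ≤ ε / 2 * #(S n) := by
    have hgood : (1 - δ) * Fintype.card (V n) ≤ (#{v | good v} : ℝ) := by
      refine hn.trans_eq ?_
      rw [Nat.card_eq_fintype_card, Fintype.card_subtype]
      congr
    calc (#{v ∈ S n | ¬ good v} : ℝ) * L ≤ δ * Fintype.card (V n) * L := by
          gcongr
          exact card_filter_not_le_of_le_card_filter (S n) good hgood
      _ ≤ ε / 2 * (c * Fintype.card (V n)) := by nlinarith
      _ ≤ ε / 2 * #(S n) := by gcongr; exact hS n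
  have hsum := sum_le_card_mul_add_card_filter_not_mul (S n)
    (fun v => rokDist ((μn n).map (soficPattern σ n F v)) Θ₁ Θ₂) good (L := L)
    (fun v _ hv => hclose _ η (hv.trans_le (min_le_left _ _)))
    (fun v _ => by linarith [hbound ((μn n).map (soficPattern σ n F v))])
  rw [one_div_mul_eq_div]
  refine div_le_of_le_mul₀ (Nat.cast_nonneg _) (by positivity) ?_
  calc _ ≤ _ := abs_soficObsEntropy_sub_le σ μn S n θ₁ θ₂
    _ ≤ _ := hsum
    _ ≤ (ρ + ε) * #(S n) := by linarith

end Sofic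

/-- A diagonal choice: `m n` is the largest `k ≤ n` whose `P k`-threshold has been passed. -/
lemma exists_monotone_tendsto_eventually_diag {P : ℕ → ℕ → Prop}
    (h : ∀ k, ∀ᶠ n in atTop, P k n) :
    ∃ m : ℕ → ℕ, (∀ n, 1 ≤ m n) ∧ Monotone m ∧ Tendsto m atTop atTop ∧
      ∀ᶠ n in atTop, P (m n) n := by
  classical
  choose N hN using fun k => eventually_atTop.1 (h k)
  refine ⟨fun n => max 1 (Nat.findGreatest (fun k => N k ≤ n) n), fun n => le_max_left _ _,
    fun a b hab => max_le_max le_rfl (Nat.findGreatest_mono (fun k hk => hk.trans hab) hab),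
    tendsto_atTop.2 fun k => eventually_atTop.2 ⟨max k (N k), fun n hn =>
      le_max_of_le_right (Nat.le_findGreatest (le_of_max_le_left hn) (le_of_max_le_right hn))⟩,
    eventually_atTop.2 ⟨max 1 (N 1), fun n hn => ?_⟩⟩
  have hspec : N (Nat.findGreatest (fun k => N k ≤ n) n) ≤ n :=
    Nat.findGreatest_spec (P := fun k => N k ≤ n) (le_of_max_le_left hn) (le_of_max_le_right hn)
  have hpos : 1 ≤ Nat.findGreatest (fun k => N k ≤ n) n :=
    Nat.le_findGreatest (le_of_max_le_left hn) (le_of_max_le_right hn)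
  simpa only [max_eq_right hpos] using hN _ n hspec

theorem stmt8_general {G : Type*} [Group G] [DecidableEq G]
    (V : ℕ → Type*) [∀ n, Fintype (V n)] [∀ n, DecidableEq (V n)]
    (σ : ∀ n, G → Equiv.Perm (V n))
    (A B : Type*) [Fintype A] [MeasurableSpace A] [DiscreteMeasurableSpace A]
    [Fintype B] [MeasurableSpace B] [DiscreteMeasurableSpace B]
    (μ : Measure (G → A)) [IsProbabilityMeasure μ]
    (μn : ∀ n, Measure (V n → A)) (hμn : ∀ n, IsProbabilityMeasure (μn n))
    (hconv : LocalWeakStarConverges σ μn μ)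
    -- the sequence of local observables `φ_m = θm m ∘ π_{Fm m} : A^G → B`
    (Fm : ℕ → Finset G) (θm : ∀ m : ℕ, (↥(Fm m) → A) → B)
    (φm : ℕ → ((G → A) → B)) (hφm : ∀ m, φm m = fun a => θm m (fun g : ↥(Fm m) => a g.1))
    -- the local observable `φ = θ ∘ π_F : A^G → B`
    (F : Finset G) (θ : (↥F → A) → B)
    (φ : (G → A) → B) (hφ : φ = fun a => θ (fun g : ↥F => a g.1))
    (c : ℝ) (hc : 0 < c)
    (S : ∀ n, Finset (V n)) (hS : ∀ n, c * (Fintype.card (V n) : ℝ) ≤ ((S n).card : ℝ)) :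
    ∃ m : ℕ → ℕ, (∀ n, 1 ≤ m n) ∧ Monotone m ∧ Tendsto m atTop atTop ∧
      ∀ ε : ℝ, 0 < ε → ∀ᶠ n in atTop,
        (1 / ((S n).card : ℝ)) *
            |shannonEntropy (Measure.map (fun (b : V n → B) (s : ↥(S n)) => b s.1)
                (Measure.map (fun (x : V n → A) (v : V n) => θ (fun g : ↥F => x (σ n g.1 v)))
                  (μn n))) -
              shannonEntropy (Measure.map (fun (b : V n → B) (s : ↥(S n)) => b s.1)
                (Measure.map
                  (fun (x : V n → A) (v : V n) =>
                    θm (m n) (fun g : ↥(Fm (m n)) => x (σ n g.1 v)))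
                  (μn n)))| ≤
          rokDist μ φ (φm (m n)) + ε := by
  obtain ⟨m, hm1, hmono, htend, hm⟩ := exists_monotone_tendsto_eventually_diag fun k =>
    eventually_soficObsEntropy_sub_le hconv hc hS θ (θm k) (Nat.one_div_pos_of_nat (n := k))
  refine ⟨m, hm1, hmono, htend, fun ε hε => ?_⟩
  obtain ⟨M, hM⟩ := exists_nat_one_div_lt hε
  filter_upwards [hm, htend.eventually_ge_atTop M] with n hn hMn
  have : 1 / ((m n : ℝ) + 1) ≤ 1 / ((M : ℝ) + 1) := by gcongr
  rw [hφ, hφm]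
  exact hn.trans (by linarith)

theorem stmt8 {G : Type*} [Group G] [Countable G] [DecidableEq G]
    (V : ℕ → Type*) [∀ n, Fintype (V n)] [∀ n, DecidableEq (V n)]
    (σ : ∀ n, G → Equiv.Perm (V n)) (hσ : IsSoficApprox σ)
    (A B : Type*) [Fintype A] [MeasurableSpace A] [DiscreteMeasurableSpace A]
    [Fintype B] [MeasurableSpace B] [DiscreteMeasurableSpace B]
    (μ : Measure (G → A)) [IsProbabilityMeasure μ]
    (hinv : ∀ g : G, Measure.map (fun (a : G → A) (k : G) => a (k * g)) μ = μ)
    (μn : ∀ n, Measure (V n → A)) (hμn : ∀ n, IsProbabilityMeasure (μn n))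
    (hconv : LocalWeakStarConverges σ μn μ)
    -- the sequence of local observables `φ_m = θm m ∘ π_{Fm m} : A^G → B`
    (Fm : ℕ → Finset G) (θm : ∀ m : ℕ, (↥(Fm m) → A) → B)
    (φm : ℕ → ((G → A) → B)) (hφm : ∀ m, φm m = fun a => θm m (fun g : ↥(Fm m) => a g.1))
    -- the local observable `φ = θ ∘ π_F : A^G → B`
    (F : Finset G) (θ : (↥F → A) → B)
    (φ : (G → A) → B) (hφ : φ = fun a => θ (fun g : ↥F => a g.1))
    (c : ℝ) (hc : 0 < c)
    (S : ∀ n, Finset (V n)) (hS : ∀ n, c * (Fintype.card (V n) : ℝ) ≤ ((S n).card : ℝ)) :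
    ∃ m : ℕ → ℕ, (∀ n, 1 ≤ m n) ∧ Monotone m ∧ Tendsto m atTop atTop ∧
      ∀ ε : ℝ, 0 < ε → ∀ᶠ n in atTop,
        (1 / ((S n).card : ℝ)) *
            |shannonEntropy (Measure.map (fun (b : V n → B) (s : ↥(S n)) => b s.1)
                (Measure.map (fun (x : V n → A) (v : V n) => θ (fun g : ↥F => x (σ n g.1 v)))
                  (μn n))) -
              shannonEntropy (Measure.map (fun (b : V n → B) (s : ↥(S n)) => b s.1)
                (Measure.map
                  (fun (x : V n → A) (v : V n) =>
                    θm (m n) (fun g : ↥(Fm (m n)) => x (σ n g.1 v)))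
                  (μn n)))| ≤
          rokDist μ φ (φm (m n)) + ε :=
  stmt8_general V σ A B μ μn hμn hconv Fm θm φm hφm F θ φ hφ c hc S hS
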